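/- The left gyroassociative law holds: for all a, b, c ∈ G, a ⊕ (b ⊕ c) = (a ⊕ b) ⊕ gyr(a,b)(c). -/

import Mathlib

/-!
Write `x ∈ G` as `x = t + h m` with `0 ≤ t < m` and `h ∈ {0, 1}`, so that `G` has coordinates
(residue mod `m`, `H`-bit). In these coordinates `⊕` adds residues and xors `H`-bits, except that
an extra `m/2` enters the residue when the first summand is an even element of `H` and the second
is odd; `gyr(a,b)` adds `m/2` to the residue of an odd `c` when `(a,b) ∈ M`. Because `4 ∣ m`, the
correction `m/2` is even, so parities simply add, and two corrections cancel mod `m`. Both sides of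
the law therefore have the same `H`-bit, and their residues agree as soon as the number of
corrections on each side has the same parity: a propositional identity in the `H`-bits of `a`,
`b` and the parities of `a`, `b`, `c`.
-/

open scoped Classical

noncomputable section

/-- `m = 2^(n-1)` -/
def m (n : ℕ) : ℤ := 2 ^ (n - 1)

/-- `P = {0, 1, ..., m-1}` -/
def Pset (n : ℕ) : Set ℤ := {x | 0 ≤ x ∧ x < m n}

/-- `H = {m, m+1, ..., 2m-1}` -/
def Hset (n : ℕ) : Set ℤ := {x | m n ≤ x ∧ x < 2 * m n}

/-- `G = {0, 1, ..., 2^n - 1}` -/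
def Gset (n : ℕ) : Set ℤ := {x | 0 ≤ x ∧ x < 2 ^ n}

/-- odd elements of `P` -/
def OP (n : ℕ) : Set ℤ := {x | x ∈ Pset n ∧ Odd x}

/-- even elements of `P` -/
def EP (n : ℕ) : Set ℤ := {x | x ∈ Pset n ∧ Even x}

/-- odd elements of `H` -/
def OH (n : ℕ) : Set ℤ := {x | x ∈ Hset n ∧ Odd x}

/-- even elements of `H` -/
def EH (n : ℕ) : Set ℤ := {x | x ∈ Hset n ∧ Even x}

/-- The binary operation `⊕` on `G`.  Here `(i+j) % m n` is the unique `t ∈ P` with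
`t ≡ i + j (mod m)` and `(i+j+m/2) % m n` is the unique `s ∈ P` with `s ≡ i+j+m/2 (mod m)`. -/
def oplus (n : ℕ) (i j : ℤ) : ℤ :=
  if i ∈ EH n ∧ j ∈ OH n then (i + j + m n / 2) % m n
  else if i ∈ EH n ∧ j ∈ OP n then (i + j + m n / 2) % m n + m n
  else if (i ∈ Pset n ∧ j ∈ Pset n) ∨ (i ∈ Hset n ∧ j ∈ Hset n) then (i + j) % m n
  else (i + j) % m n + m n

/-- The map `A : G → G`; `(i + m/2) % m n` is the unique `r ∈ P` with `r ≡ i + m/2 (mod m)`. -/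
def Amap (n : ℕ) (i : ℤ) : ℤ :=
  if i ∈ OP n then (i + m n / 2) % m n
  else if i ∈ OH n then (i + m n / 2) % m n + m n
  else i

/-- `M = (O_P × (O_H ∪ E_H)) ∪ (O_H × (O_P ∪ E_H)) ∪ (E_H × (O_P ∪ O_H))` -/
def Mset (n : ℕ) : Set (ℤ × ℤ) :=
  (OP n ×ˢ (OH n ∪ EH n)) ∪ (OH n ×ˢ (OP n ∪ EH n)) ∪ (EH n ×ˢ (OP n ∪ OH n))

/-- `gyr(a,b) = A` if `(a,b) ∈ M`, and the identity otherwise. -/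
def gyr (n : ℕ) (a b : ℤ) : ℤ → ℤ :=
  if (a, b) ∈ Mset n then Amap n else id

section

variable {n : ℕ}

lemma m_pos (n : ℕ) : 0 < m n := by
  unfold m; positivity

lemma m_eq_four_mul (hn : 3 ≤ n) : m n = 4 * 2 ^ (n - 3) := by
  rw [m, show n - 1 = (n - 3) + 2 by omega, pow_add]; ring

lemma two_dvd_m (hn : 2 ≤ n) : 2 ∣ m n :=
  dvd_pow_self 2 (by omega)

lemma two_pow_eq_two_mul_m (hn : 1 ≤ n) : (2 : ℤ) ^ n = 2 * m n := by
  rw [m, ← pow_succ']; congr 1; omega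

def halfIf (n : ℕ) (p : Prop) : ℤ := if p then m n / 2 else 0

lemma halfIf_congr {p q : Prop} (h : p ↔ q) : halfIf n p = halfIf n q := by
  simp only [halfIf, h]

lemma even_halfIf (hn : 3 ≤ n) (p : Prop) : Even (halfIf n p) := by
  unfold halfIf
  split_ifs
  · rw [m_eq_four_mul hn]; exact ⟨2 ^ (n - 3), by omega⟩
  · exact Even.zero

lemma halfIf_add_halfIf (hn : 2 ≤ n) (p q : Prop) :
    halfIf n p + halfIf n q ≡ halfIf n (Xor p q) [ZMOD m n] := by
  obtain ⟨k, hk⟩ := two_dvd_m hn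
  unfold halfIf
  by_cases hp : p <;> by_cases hq : q <;> simp only [hp, hq, if_true, if_false, xor_self,
    xor_true, xor_false, not_false_eq_true, add_zero, zero_add, id, Int.ModEq.refl]
  exact Int.modEq_iff_dvd.mpr ⟨-1, by omega⟩

lemma odd_add_iff_xor (x y : ℤ) : Odd (x + y) ↔ Xor (Odd x) (Odd y) := by
  rw [Int.odd_add, ← Int.not_odd_iff_even, xor_iff_not_iff]; tauto

lemma odd_add_halfIf_iff (hn : 3 ≤ n) (x : ℤ) (p : Prop) : Odd (x + halfIf n p) ↔ Odd x := by
  rw [Int.odd_add]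
  simp only [even_halfIf hn p, iff_true]

def ofCoords (n : ℕ) (z : ℤ) (p : Prop) : ℤ := z % m n + if p then m n else 0

lemma ofCoords_mem_Gset (hn : 1 ≤ n) (z : ℤ) (p : Prop) : ofCoords n z p ∈ Gset n := by
  have h0 := Int.emod_nonneg z (m_pos n).ne'
  have h1 := Int.emod_lt_of_pos z (m_pos n)
  simp only [ofCoords, Gset, Set.mem_ofPred_eq, two_pow_eq_two_mul_m hn]
  split_ifs <;> omega

lemma ofCoords_mem_Hset_iff (z : ℤ) (p : Prop) : ofCoords n z p ∈ Hset n ↔ p := by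
  have h0 := Int.emod_nonneg z (m_pos n).ne'
  have h1 := Int.emod_lt_of_pos z (m_pos n)
  simp only [ofCoords, Hset, Set.mem_ofPred_eq]
  split_ifs with hp <;> simp only [hp, iff_true, iff_false] <;> omega

lemma ofCoords_modEq (z : ℤ) (p : Prop) : ofCoords n z p ≡ z [ZMOD m n] := by
  unfold ofCoords Int.ModEq
  split_ifs <;> simp

lemma ofCoords_congr {z z' : ℤ} {p q : Prop} (hz : z ≡ z' [ZMOD m n]) (hp : p ↔ q) :
    ofCoords n z p = ofCoords n z' q := by
  simp only [ofCoords, hz.eq, hp]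

lemma ofCoords_self (hn : 1 ≤ n) {x : ℤ} (hx : x ∈ Gset n) : ofCoords n x (x ∈ Hset n) = x := by
  simp only [Gset, Hset, Set.mem_ofPred_eq, two_pow_eq_two_mul_m hn] at hx ⊢
  unfold ofCoords
  split_ifs with h
  · rw [show x % m n = (x - m n) % m n by simp, Int.emod_eq_of_lt (by omega) (by omega)]; ring
  · rw [Int.emod_eq_of_lt hx.1 (by omega)]; ring

lemma odd_ofCoords_iff (hn : 2 ≤ n) (z : ℤ) (p : Prop) : Odd (ofCoords n z p) ↔ Odd z := by
  have h := ((ofCoords_modEq z p).of_dvd (two_dvd_m hn)).eq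
  simp only [Int.odd_iff, h]

def twist (n : ℕ) (x y : ℤ) : Prop := x ∈ Hset n ∧ ¬Odd x ∧ Odd y

lemma oplus_eq_ofCoords (hn : 3 ≤ n) {x y : ℤ} (hx : x ∈ Gset n) (hy : y ∈ Gset n) :
    oplus n x y =
      ofCoords n (x + y + halfIf n (twist n x y)) (Xor (x ∈ Hset n) (y ∈ Hset n)) := by
  obtain ⟨k, hk⟩ : ∃ k, m n = 4 * k := ⟨_, m_eq_four_mul hn⟩
  have h2 := two_pow_eq_two_mul_m (n := n) (by omega)
  have := m_pos n
  simp only [oplus, ofCoords, halfIf, twist, OP, OH, EH, Pset, Hset, Gset, Set.mem_ofPred_eq,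
    Int.even_iff, Int.odd_iff, xor_iff_not_iff, h2, hk] at *
  split_ifs <;> first | (exfalso; omega) | simp

lemma Amap_eq_ofCoords (hn : 3 ≤ n) {c : ℤ} (hc : c ∈ Gset n) :
    Amap n c = ofCoords n (c + halfIf n (Odd c)) (c ∈ Hset n) := by
  by_cases hodd : Odd c
  · have h2 := two_pow_eq_two_mul_m (n := n) (by omega)
    simp only [Amap, ofCoords, halfIf, OP, OH, Pset, Hset, Gset, Set.mem_ofPred_eq, h2,
      hodd, and_true] at hc ⊢
    split_ifs <;> first | (exfalso; omega) | simp_all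
  · simp only [Amap, OP, OH, Set.mem_ofPred_eq, halfIf, hodd, and_false, if_false, add_zero,
      ofCoords_self (by omega) hc]

lemma gyr_eq_ofCoords (hn : 3 ≤ n) (a b : ℤ) {c : ℤ} (hc : c ∈ Gset n) :
    gyr n a b c = ofCoords n (c + halfIf n ((a, b) ∈ Mset n ∧ Odd c)) (c ∈ Hset n) := by
  unfold gyr
  split_ifs with hM
  · simp only [Amap_eq_ofCoords hn hc, hM, true_and]
  · simp only [halfIf, hM, false_and, if_false, add_zero, id, ofCoords_self (by omega) hc]

lemma mem_Mset_iff (hn : 1 ≤ n) {a b : ℤ} (ha : a ∈ Gset n) (hb : b ∈ Gset n) :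
    (a, b) ∈ Mset n ↔
      (¬a ∈ Hset n ∧ Odd a ∧ b ∈ Hset n) ∨ (a ∈ Hset n ∧ Odd a ∧ Xor (b ∈ Hset n) (Odd b)) ∨
        (a ∈ Hset n ∧ ¬Odd a ∧ Odd b) := by
  have h2 := two_pow_eq_two_mul_m hn
  simp only [Mset, OP, OH, EH, Pset, Hset, Gset, Set.mem_ofPred_eq, Set.mem_union,
    Set.mem_prod, Int.even_iff, Int.odd_iff, xor_iff_not_iff, h2] at *
  omega

lemma oplus_mem_Gset (hn : 3 ≤ n) {x y : ℤ} (hx : x ∈ Gset n) (hy : y ∈ Gset n) :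
    oplus n x y ∈ Gset n := by
  rw [oplus_eq_ofCoords hn hx hy]; exact ofCoords_mem_Gset (by omega) _ _

lemma oplus_mem_Hset_iff (hn : 3 ≤ n) {x y : ℤ} (hx : x ∈ Gset n) (hy : y ∈ Gset n) :
    oplus n x y ∈ Hset n ↔ Xor (x ∈ Hset n) (y ∈ Hset n) := by
  rw [oplus_eq_ofCoords hn hx hy, ofCoords_mem_Hset_iff]

lemma oplus_modEq (hn : 3 ≤ n) {x y : ℤ} (hx : x ∈ Gset n) (hy : y ∈ Gset n) :
    oplus n x y ≡ x + y + halfIf n (twist n x y) [ZMOD m n] := by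
  rw [oplus_eq_ofCoords hn hx hy]; exact ofCoords_modEq _ _

lemma odd_oplus_iff (hn : 3 ≤ n) {x y : ℤ} (hx : x ∈ Gset n) (hy : y ∈ Gset n) :
    Odd (oplus n x y) ↔ Xor (Odd x) (Odd y) := by
  rw [oplus_eq_ofCoords hn hx hy, odd_ofCoords_iff (by omega), odd_add_halfIf_iff hn,
    odd_add_iff_xor]

lemma gyr_mem_Gset (hn : 3 ≤ n) (a b : ℤ) {c : ℤ} (hc : c ∈ Gset n) : gyr n a b c ∈ Gset n := by
  rw [gyr_eq_ofCoords hn a b hc]; exact ofCoords_mem_Gset (by omega) _ _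

lemma gyr_mem_Hset_iff (hn : 3 ≤ n) (a b : ℤ) {c : ℤ} (hc : c ∈ Gset n) :
    gyr n a b c ∈ Hset n ↔ c ∈ Hset n := by
  rw [gyr_eq_ofCoords hn a b hc, ofCoords_mem_Hset_iff]

lemma gyr_modEq (hn : 3 ≤ n) (a b : ℤ) {c : ℤ} (hc : c ∈ Gset n) :
    gyr n a b c ≡ c + halfIf n ((a, b) ∈ Mset n ∧ Odd c) [ZMOD m n] := by
  rw [gyr_eq_ofCoords hn a b hc]; exact ofCoords_modEq _ _

lemma odd_gyr_iff (hn : 3 ≤ n) (a b : ℤ) {c : ℤ} (hc : c ∈ Gset n) :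
    Odd (gyr n a b c) ↔ Odd c := by
  rw [gyr_eq_ofCoords hn a b hc, odd_ofCoords_iff (by omega), odd_add_halfIf_iff hn]

lemma twist_cocycle_bits (A B Pa Pb Pc : Prop) :
    Xor (B ∧ ¬Pb ∧ Pc) (A ∧ ¬Pa ∧ Xor Pb Pc) ↔
      Xor (Xor (A ∧ ¬Pa ∧ Pb)
          (((¬A ∧ Pa ∧ B) ∨ (A ∧ Pa ∧ Xor B Pb) ∨ (A ∧ ¬Pa ∧ Pb)) ∧ Pc))
        (Xor A B ∧ ¬Xor Pa Pb ∧ Pc) := by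
  simp only [xor_iff_not_iff]; tauto

lemma twist_cocycle (hn : 3 ≤ n) {a b c : ℤ} (ha : a ∈ Gset n) (hb : b ∈ Gset n)
    (hc : c ∈ Gset n) :
    halfIf n (twist n b c) + halfIf n (twist n a (oplus n b c)) ≡
      halfIf n (twist n a b) + halfIf n ((a, b) ∈ Mset n ∧ Odd c) +
        halfIf n (twist n (oplus n a b) (gyr n a b c)) [ZMOD m n] := by
  have hn2 : 2 ≤ n := by omega
  calc _ ≡ halfIf n (Xor (twist n b c) (twist n a (oplus n b c))) [ZMOD m n] :=
        halfIf_add_halfIf hn2 _ _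
    _ = halfIf n (Xor (Xor (twist n a b) ((a, b) ∈ Mset n ∧ Odd c))
          (twist n (oplus n a b) (gyr n a b c))) := by
        refine halfIf_congr ?_
        simp only [twist, oplus_mem_Hset_iff hn ha hb, odd_oplus_iff hn ha hb,
          odd_oplus_iff hn hb hc, odd_gyr_iff hn a b hc,
          mem_Mset_iff (by omega) ha hb]
        exact twist_cocycle_bits _ _ _ _ _
    _ ≡ _ [ZMOD m n] :=
        (((halfIf_add_halfIf hn2 _ _).add_right _).trans (halfIf_add_halfIf hn2 _ _)).symm

lemma oplus_gyroassoc_modEq (hn : 3 ≤ n) {a b c : ℤ} (ha : a ∈ Gset n) (hb : b ∈ Gset n)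
    (hc : c ∈ Gset n) :
    a + oplus n b c + halfIf n (twist n a (oplus n b c)) ≡
      oplus n a b + gyr n a b c + halfIf n (twist n (oplus n a b) (gyr n a b c)) [ZMOD m n] :=
  calc a + oplus n b c + halfIf n (twist n a (oplus n b c))
      ≡ a + (b + c + halfIf n (twist n b c)) + halfIf n (twist n a (oplus n b c)) [ZMOD m n] :=
        ((oplus_modEq hn hb hc).add_left a).add_right _
    _ = a + b + c + (halfIf n (twist n b c) + halfIf n (twist n a (oplus n b c))) := by ring
    _ ≡ a + b + c + (halfIf n (twist n a b) + halfIf n ((a, b) ∈ Mset n ∧ Odd c) +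
          halfIf n (twist n (oplus n a b) (gyr n a b c))) [ZMOD m n] :=
        (twist_cocycle hn ha hb hc).add_left _
    _ = (a + b + halfIf n (twist n a b)) + (c + halfIf n ((a, b) ∈ Mset n ∧ Odd c)) +
          halfIf n (twist n (oplus n a b) (gyr n a b c)) := by ring
    _ ≡ oplus n a b + gyr n a b c + halfIf n (twist n (oplus n a b) (gyr n a b c)) [ZMOD m n] :=
        (((oplus_modEq hn ha hb).add (gyr_modEq hn a b hc)).add_right _).symm

end

/-- the left gyroassociative law. -/
theorem stmt8 (n : ℕ) (hn : 3 ≤ n) :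
    ∀ a ∈ Gset n, ∀ b ∈ Gset n, ∀ c ∈ Gset n,
      oplus n a (oplus n b c) = oplus n (oplus n a b) (gyr n a b c) := by
  intro a ha b hb c hc
  have hbc := oplus_mem_Gset hn hb hc
  have hab := oplus_mem_Gset hn ha hb
  have hgc := gyr_mem_Gset hn a b hc
  rw [oplus_eq_ofCoords hn ha hbc, oplus_eq_ofCoords hn hab hgc]
  refine ofCoords_congr (oplus_gyroassoc_modEq hn ha hb hc) ?_
  rw [oplus_mem_Hset_iff hn hb hc, oplus_mem_Hset_iff hn ha hb, gyr_mem_Hset_iff hn a b hc]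
  simp only [xor_iff_not_iff]
  tauto
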